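/- Let f : ℝ → ℝ be a convex function with f(0) ≤ 0, let A be an n×n Hermitian complex matrix, and let Z be an n×n complex matrix which is a contraction (operator norm at most 1). Then for every j ≥ 1 with 2j−1 ≤ n, λ_{2j-1}(f(Zᴴ A Z)) ≤ λ_j(Zᴴ f(A) Z), where λ_j(·) denotes the j-th largest eigenvalue counted with multiplicity. -/

import Mathlib

/-!
Let `B = Zᴴ A Z` have eigenvalues `λ i` and let `ν` be the `(2j-1)`-th largest of the numbers
`f (λ i)`. Courant–Fischer, applied on the span of the eigenvectors with `f (λ i) ≤ ν`, gives
`λ_{2j-1}(f(B)) ≤ ν`.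

Conversely, at every point a convex `f` is nondecreasing to the right or nonincreasing to the
left, so among the `2j-1` eigenvalues with `ν ≤ f (λ i)` there are `j` on which `f` is monotone
in the same direction. For a unit vector `x` in the span of their eigenvectors, `⟪x, B x⟫` lies
between the smallest and the largest of them, hence `ν ≤ f ⟪x, B x⟫`; and as `‖Z x‖ ≤ 1` and
`f 0 ≤ 0`, Jensen's inequality in the eigenbasis of `A` gives
`f ⟪Z x, A Z x⟫ ≤ ⟪Z x, f(A) Z x⟫ = ⟪x, Zᴴ f(A) Z x⟫`. Courant–Fischer gives `ν ≤ λ_j(Zᴴ f(A) Z)`.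
-/
open Matrix
open scoped ComplexOrder

/-- The `j`-th largest eigenvalue of a Hermitian matrix (`0`-indexed, so `eigDesc hA ⟨0, _⟩`
is the largest), counted with multiplicity. -/
noncomputable def eigDesc {n : ℕ} {A : Matrix (Fin n) (Fin n) ℂ} (hA : A.IsHermitian)
    (j : Fin n) : ℝ :=
  hA.eigenvalues (Tuple.sort hA.eigenvalues j.rev)

/-- Applying a real function to a Hermitian matrix via the functional calculus yields a
Hermitian matrix. -/
lemma isHermitian_cfc {n : ℕ} {A : Matrix (Fin n) (Fin n) ℂ} (hA : A.IsHermitian)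
    (f : ℝ → ℝ) : (hA.cfc f).IsHermitian := by
  rw [← hA.cfc_eq]
  exact cfc_predicate f A

lemma isHermitian_half_smul {n : ℕ} {X : Matrix (Fin n) (Fin n) ℂ} (hX : X.IsHermitian) :
    ((2 : ℝ)⁻¹ • X).IsHermitian := by
  show _ = _
  rw [Matrix.conjTranspose_smul, star_trivial, hX.eq]

lemma isHermitian_sum_conj {m n : ℕ} {A : Fin m → Matrix (Fin n) (Fin n) ℂ}
    (Z : Fin m → Matrix (Fin n) (Fin n) ℂ) (hA : ∀ i, (A i).IsHermitian) :
    (∑ i, (Z i)ᴴ * A i * Z i).IsHermitian := by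
  show _ = _
  rw [Matrix.conjTranspose_sum]
  exact Finset.sum_congr rfl fun i _ => (isHermitian_conjTranspose_mul_mul (Z i) (hA i)).eq

theorem ConvexOn.map_sum_le_of_sum_le_one {𝕜 E β ι : Type*} [Field 𝕜] [LinearOrder 𝕜]
    [IsStrictOrderedRing 𝕜] [AddCommGroup E] [Module 𝕜 E] [AddCommGroup β] [PartialOrder β]
    [IsOrderedAddMonoid β] [Module 𝕜 β] [IsStrictOrderedModule 𝕜 β] {s : Set E} {f : E → β}
    {t : Finset ι} {w : ι → 𝕜} {p : ι → E} (hf : ConvexOn 𝕜 s f) (h0 : (0 : E) ∈ s)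
    (hf0 : f 0 ≤ 0) (hw0 : ∀ i ∈ t, 0 ≤ w i) (hw1 : ∑ i ∈ t, w i ≤ 1)
    (hp : ∀ i ∈ t, p i ∈ s) :
    f (∑ i ∈ t, w i • p i) ≤ ∑ i ∈ t, w i • f (p i) := by
  have h := hf.map_add_sum_le hw0 (sub_add_cancel 1 _) hp (sub_nonneg.mpr hw1) h0
  rw [smul_zero, zero_add] at h
  exact h.trans (add_le_of_nonpos_left (smul_nonpos_of_nonneg_of_nonpos (sub_nonneg.mpr hw1) hf0))

theorem ConvexOn.monotoneOn_Ici_or_antitoneOn_Iic {𝕜 β : Type*} [Field 𝕜] [LinearOrder 𝕜]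
    [IsStrictOrderedRing 𝕜] [AddCommGroup β] [LinearOrder β] [IsOrderedAddMonoid β]
    [Module 𝕜 β] [IsStrictOrderedModule 𝕜 β] {f : 𝕜 → β} (hf : ConvexOn 𝕜 Set.univ f) (a : 𝕜) :
    MonotoneOn f (Set.Ici a) ∨ AntitoneOn f (Set.Iic a) := by
  refine or_iff_not_imp_left.mpr fun hmono u hu v hv huv => ?_
  obtain ⟨s, hs, t, ht, hst, hfts⟩ : ∃ s ∈ Set.Ici a, ∃ t ∈ Set.Ici a, s ≤ t ∧ f t < f s := by
    simpa [MonotoneOn] using hmono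
  have hvs : v ≤ s := le_trans hv hs
  have hftv : f t < f v := by
    have := hf.le_max_of_mem_Icc trivial trivial (⟨hvs, hst⟩ : s ∈ Set.Icc v t)
    rcases le_max_iff.mp this with h | h
    · exact hfts.trans_le h
    · exact absurd h (not_le.mpr hfts)
  have := hf.le_max_of_mem_Icc trivial trivial (⟨huv, hvs.trans hst⟩ : v ∈ Set.Icc u t)
  exact (le_max_iff.mp this).resolve_right (not_le.mpr hftv)

theorem Finset.exists_subset_card_eq_and_forall_or {α : Type*} {s : Finset α} {p q : α → Prop}
    (h : ∀ a ∈ s, p a ∨ q a) {k : ℕ} (hs : 2 * k + 1 ≤ s.card) :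
    ∃ t ⊆ s, t.card = k + 1 ∧ ((∀ a ∈ t, p a) ∨ ∀ a ∈ t, q a) := by
  classical
  have hcard := s.card_filter_add_card_filter_not p
  by_cases hp : k + 1 ≤ (s.filter p).card
  · obtain ⟨t, hts, htk⟩ := Finset.exists_subset_card_eq hp
    exact ⟨t, hts.trans (s.filter_subset p), htk,
      .inl fun a ha => (Finset.mem_filter.mp (hts ha)).2⟩
  · obtain ⟨t, hts, htk⟩ :=
      Finset.exists_subset_card_eq (s := s.filter (¬ p ·)) (n := k + 1) (by omega)
    refine ⟨t, hts.trans (s.filter_subset _), htk, .inr fun a ha => ?_⟩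
    obtain ⟨has, hpa⟩ := Finset.mem_filter.mp (hts ha)
    exact (h a has).resolve_left hpa

namespace Matrix

variable {m : Type*} [Fintype m]

lemma star_dotProduct_conjTranspose_mul_mul_mulVec (B M : Matrix m m ℂ) (x : m → ℂ) :
    star x ⬝ᵥ ((Bᴴ * M * B) *ᵥ x) = star (B *ᵥ x) ⬝ᵥ (M *ᵥ (B *ᵥ x)) := by
  rw [← mulVec_mulVec, ← mulVec_mulVec, star_mulVec, ← dotProduct_mulVec]

lemma re_star_dotProduct_smul_self (c : ℝ) (x : m → ℂ) :
    (star ((c : ℂ) • x) ⬝ᵥ ((c : ℂ) • x)).re = c ^ 2 * (star x ⬝ᵥ x).re := by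
  simp [star_smul, smul_dotProduct, dotProduct_smul, sq, mul_assoc]

lemma exists_re_star_dotProduct_self_eq_one_mem_inf (M N : Submodule ℂ (m → ℂ))
    (h : Fintype.card m < Module.finrank ℂ M + Module.finrank ℂ N) :
    ∃ x ∈ M ⊓ N, (star x ⬝ᵥ x).re = 1 := by
  have hsup : Module.finrank ℂ ↥(M ⊔ N) ≤ Fintype.card m := by
    simpa using Submodule.finrank_le (M ⊔ N)
  have hinf : 0 < Module.finrank ℂ ↥(M ⊓ N) := by
    have := Submodule.finrank_sup_add_finrank_inf_eq M N
    omega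
  obtain ⟨⟨x, hx⟩, hx0⟩ := Module.finrank_pos_iff_exists_ne_zero.mp hinf
  have hpos : 0 < (star x ⬝ᵥ x).re := by
    have := dotProduct_star_self_pos_iff.mpr (by simpa using hx0 : x ≠ 0)
    exact (Complex.pos_iff.mp this).1
  refine ⟨(((√(star x ⬝ᵥ x).re)⁻¹ : ℝ) : ℂ) • x, (M ⊓ N).smul_mem _ hx, ?_⟩
  rw [re_star_dotProduct_smul_self, inv_pow, Real.sq_sqrt hpos.le, inv_mul_cancel₀ hpos.ne']

variable [DecidableEq m]

lemma re_star_dotProduct_diagonal_mulVec (d : m → ℝ) (y : m → ℂ) :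
    (star y ⬝ᵥ (diagonal (fun i => (d i : ℂ)) *ᵥ y)).re = ∑ i, Complex.normSq (y i) * d i := by
  simp only [mulVec_diagonal, dotProduct, Pi.star_apply, Complex.re_sum]
  refine Finset.sum_congr rfl fun i _ => ?_
  rw [mul_left_comm, Complex.star_def, ← Complex.normSq_eq_conj_mul_self, ← Complex.ofReal_mul,
    Complex.ofReal_re, mul_comm]

lemma re_star_mulVec_dotProduct_mulVec_le {Z : Matrix m m ℂ} (hZ : (1 - Zᴴ * Z).PosSemidef)
    (x : m → ℂ) : (star (Z *ᵥ x) ⬝ᵥ (Z *ᵥ x)).re ≤ (star x ⬝ᵥ x).re := by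
  have h := Complex.nonneg_iff.mp (hZ.dotProduct_mulVec_nonneg x)
  have h2 := star_dotProduct_conjTranspose_mul_mul_mulVec Z 1 x
  rw [Matrix.mul_one, one_mulVec] at h2
  rw [sub_mulVec, one_mulVec, dotProduct_sub, h2, Complex.sub_re] at h
  linarith [h.1]

end Matrix

namespace Matrix.IsHermitian

section

variable {m : Type*} [Fintype m] [DecidableEq m] {X : Matrix m m ℂ} (hX : X.IsHermitian)

noncomputable def eigenWeight (x : m → ℂ) (i : m) : ℝ :=
  Complex.normSq ((star (hX.eigenvectorUnitary : Matrix m m ℂ) *ᵥ x) i)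

lemma eigenWeight_nonneg (x : m → ℂ) (i : m) : 0 ≤ hX.eigenWeight x i :=
  Complex.normSq_nonneg _

lemma cfc_id_eq : hX.cfc id = X :=
  hX.spectral_theorem.symm

lemma re_star_dotProduct_cfc_mulVec (g : ℝ → ℝ) (x : m → ℂ) :
    (star x ⬝ᵥ (hX.cfc g *ᵥ x)).re = ∑ i, hX.eigenWeight x i * g (hX.eigenvalues i) := by
  have h := star_dotProduct_conjTranspose_mul_mul_mulVec
    (star (hX.eigenvectorUnitary : Matrix m m ℂ)) (diagonal (RCLike.ofReal ∘ g ∘ hX.eigenvalues)) x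
  rw [star_eq_conjTranspose, conjTranspose_conjTranspose, ← star_eq_conjTranspose] at h
  rw [IsHermitian.cfc, Unitary.conjStarAlgAut_apply, h]
  exact re_star_dotProduct_diagonal_mulVec _ _

lemma sum_eigenWeight (x : m → ℂ) : ∑ i, hX.eigenWeight x i = (star x ⬝ᵥ x).re := by
  have h1 : hX.cfc (fun _ => 1) = 1 := by
    simp [IsHermitian.cfc, Function.comp_def]
  simpa [h1] using (hX.re_star_dotProduct_cfc_mulVec (fun _ => 1) x).symm

lemma map_re_star_dotProduct_mulVec_le {f : ℝ → ℝ} (hf : ConvexOn ℝ Set.univ f) (hf0 : f 0 ≤ 0)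
    {x : m → ℂ} (hx : (star x ⬝ᵥ x).re ≤ 1) :
    f (star x ⬝ᵥ (X *ᵥ x)).re ≤ (star x ⬝ᵥ (hX.cfc f *ᵥ x)).re := by
  have hXx := hX.re_star_dotProduct_cfc_mulVec id x
  rw [hX.cfc_id_eq] at hXx
  rw [← hX.sum_eigenWeight x] at hx
  rw [hXx, re_star_dotProduct_cfc_mulVec]
  simpa using hf.map_sum_le_of_sum_le_one (Set.mem_univ 0) hf0
    (fun i _ => hX.eigenWeight_nonneg x i) hx (fun i _ => Set.mem_univ (hX.eigenvalues i))

lemma map_re_star_dotProduct_conj_mulVec_le {f : ℝ → ℝ}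
    (hf : ConvexOn ℝ Set.univ f) (hf0 : f 0 ≤ 0) {Z : Matrix m m ℂ}
    (hZ : (1 - Zᴴ * Z).PosSemidef) {x : m → ℂ} (hx : (star x ⬝ᵥ x).re ≤ 1) :
    f (star x ⬝ᵥ ((Zᴴ * X * Z) *ᵥ x)).re ≤ (star x ⬝ᵥ ((Zᴴ * hX.cfc f * Z) *ᵥ x)).re := by
  rw [star_dotProduct_conjTranspose_mul_mul_mulVec, star_dotProduct_conjTranspose_mul_mul_mulVec]
  exact hX.map_re_star_dotProduct_mulVec_le hf hf0
    ((re_star_mulVec_dotProduct_mulVec_le hZ x).trans hx)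

noncomputable def eigenvectorSpan (S : Finset m) : Submodule ℂ (m → ℂ) :=
  Submodule.span ℂ (Set.range fun i : S => ⇑(hX.eigenvectorBasis i))

lemma finrank_eigenvectorSpan (S : Finset m) :
    Module.finrank ℂ (hX.eigenvectorSpan S) = S.card := by
  have hli : LinearIndependent ℂ fun i : S => ⇑(hX.eigenvectorBasis i) :=
    ((hX.eigenvectorBasis.orthonormal.linearIndependent.map' _
      (WithLp.linearEquiv 2 ℂ (m → ℂ)).ker).comp _ Subtype.val_injective)
  rw [eigenvectorSpan, finrank_span_eq_card hli, Fintype.card_coe]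

variable {hX}

lemma eigenWeight_eq_zero_of_mem_eigenvectorSpan {S : Finset m} {x : m → ℂ}
    (hx : x ∈ hX.eigenvectorSpan S) {i : m} (hi : i ∉ S) : hX.eigenWeight x i = 0 := by
  suffices hX.eigenvectorSpan S ≤ LinearMap.ker ((LinearMap.proj i).comp
      (star (hX.eigenvectorUnitary : Matrix m m ℂ)).mulVecLin) by
    simpa [eigenWeight] using this hx
  refine Submodule.span_le.mpr (Set.range_subset_iff.mpr fun j => ?_)
  have hji : (j : m) ≠ i := fun h => hi (h ▸ j.2)
  simp [star_eigenvectorUnitary_mulVec, hji.symm]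

lemma re_star_dotProduct_cfc_mulVec_le {g : ℝ → ℝ} {S : Finset m} {μ : ℝ}
    (hS : ∀ i ∈ S, g (hX.eigenvalues i) ≤ μ) {x : m → ℂ} (hx : x ∈ hX.eigenvectorSpan S) :
    (star x ⬝ᵥ (hX.cfc g *ᵥ x)).re ≤ μ * (star x ⬝ᵥ x).re := by
  rw [re_star_dotProduct_cfc_mulVec, ← hX.sum_eigenWeight x, Finset.mul_sum]
  refine Finset.sum_le_sum fun i _ => ?_
  by_cases hi : i ∈ S
  · rw [mul_comm μ]
    exact mul_le_mul_of_nonneg_left (hS i hi) (hX.eigenWeight_nonneg x i)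
  · simp [eigenWeight_eq_zero_of_mem_eigenvectorSpan hx hi]

lemma le_re_star_dotProduct_cfc_mulVec {g : ℝ → ℝ} {S : Finset m} {μ : ℝ}
    (hS : ∀ i ∈ S, μ ≤ g (hX.eigenvalues i)) {x : m → ℂ} (hx : x ∈ hX.eigenvectorSpan S) :
    μ * (star x ⬝ᵥ x).re ≤ (star x ⬝ᵥ (hX.cfc g *ᵥ x)).re := by
  rw [re_star_dotProduct_cfc_mulVec, ← hX.sum_eigenWeight x, Finset.mul_sum]
  refine Finset.sum_le_sum fun i _ => ?_
  by_cases hi : i ∈ S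
  · rw [mul_comm μ]
    exact mul_le_mul_of_nonneg_left (hS i hi) (hX.eigenWeight_nonneg x i)
  · simp [eigenWeight_eq_zero_of_mem_eigenvectorSpan hx hi]

lemma re_star_dotProduct_mulVec_le {S : Finset m} {μ : ℝ} (hS : ∀ i ∈ S, hX.eigenvalues i ≤ μ)
    {x : m → ℂ} (hx : x ∈ hX.eigenvectorSpan S) :
    (star x ⬝ᵥ (X *ᵥ x)).re ≤ μ * (star x ⬝ᵥ x).re := by
  simpa only [hX.cfc_id_eq] using re_star_dotProduct_cfc_mulVec_le (g := id) hS hx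

lemma le_re_star_dotProduct_mulVec {S : Finset m} {μ : ℝ} (hS : ∀ i ∈ S, μ ≤ hX.eigenvalues i)
    {x : m → ℂ} (hx : x ∈ hX.eigenvectorSpan S) :
    μ * (star x ⬝ᵥ x).re ≤ (star x ⬝ᵥ (X *ᵥ x)).re := by
  simpa only [hX.cfc_id_eq] using le_re_star_dotProduct_cfc_mulVec (g := id) hS hx

lemma le_map_re_star_dotProduct_mulVec {f : ℝ → ℝ} {S : Finset m} (hS : S.Nonempty) {ν : ℝ}
    (hν : ∀ i ∈ S, ν ≤ f (hX.eigenvalues i))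
    (hf : (∀ i ∈ S, MonotoneOn f (Set.Ici (hX.eigenvalues i))) ∨
      ∀ i ∈ S, AntitoneOn f (Set.Iic (hX.eigenvalues i)))
    {x : m → ℂ} (hx : x ∈ hX.eigenvectorSpan S) (hx1 : (star x ⬝ᵥ x).re = 1) :
    ν ≤ f (star x ⬝ᵥ (X *ᵥ x)).re := by
  rcases hf with hmono | hanti
  · obtain ⟨i, hi, hmin⟩ := S.exists_min_image hX.eigenvalues hS
    have hle : hX.eigenvalues i ≤ (star x ⬝ᵥ (X *ᵥ x)).re := by
      simpa [hx1] using le_re_star_dotProduct_mulVec hmin hx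
    exact (hν i hi).trans (hmono i hi Set.self_mem_Ici hle hle)
  · obtain ⟨i, hi, hmax⟩ := S.exists_max_image hX.eigenvalues hS
    have hle : (star x ⬝ᵥ (X *ᵥ x)).re ≤ hX.eigenvalues i := by
      simpa [hx1] using re_star_dotProduct_mulVec_le hmax hx
    exact (hν i hi).trans (hanti i hi hle Set.self_mem_Iic hle)

end

variable {n : ℕ} {X : Matrix (Fin n) (Fin n) ℂ} (hX : X.IsHermitian)

lemma le_eigDesc_of_le_re_star_dotProduct_mulVec (k : Fin n) {μ : ℝ}
    (M : Submodule ℂ (Fin n → ℂ)) (hM : (k : ℕ) + 1 ≤ Module.finrank ℂ M)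
    (h : ∀ x ∈ M, (star x ⬝ᵥ x).re = 1 → μ ≤ (star x ⬝ᵥ (X *ᵥ x)).re) :
    μ ≤ eigDesc hX k := by
  set S := (Finset.Iic k.rev).image (Tuple.sort hX.eigenvalues)
  have hS : S.card = n - k := by
    rw [Finset.card_image_of_injective _ (Tuple.sort _).injective, Fin.card_Iic, Fin.val_rev]
    omega
  obtain ⟨x, ⟨hxM, hxS⟩, hx1⟩ := exists_re_star_dotProduct_self_eq_one_mem_inf M
    (hX.eigenvectorSpan S) (by rw [hX.finrank_eigenvectorSpan, hS, Fintype.card_fin]; omega)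
  have hbound : ∀ i ∈ S, hX.eigenvalues i ≤ eigDesc hX k := by
    simp only [S, Finset.forall_mem_image, Finset.mem_Iic]
    exact fun i hi => Tuple.monotone_sort hX.eigenvalues hi
  simpa [hx1] using (h x hxM hx1).trans (re_star_dotProduct_mulVec_le hbound hxS)

lemma eigDesc_le_of_re_star_dotProduct_mulVec_le (k : Fin n) {μ : ℝ}
    (M : Submodule ℂ (Fin n → ℂ)) (hM : n - k ≤ Module.finrank ℂ M)
    (h : ∀ x ∈ M, (star x ⬝ᵥ x).re = 1 → (star x ⬝ᵥ (X *ᵥ x)).re ≤ μ) :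
    eigDesc hX k ≤ μ := by
  set S := (Finset.Ici k.rev).image (Tuple.sort hX.eigenvalues)
  have hS : S.card = k + 1 := by
    rw [Finset.card_image_of_injective _ (Tuple.sort _).injective, Fin.card_Ici, Fin.val_rev]
    omega
  obtain ⟨x, ⟨hxM, hxS⟩, hx1⟩ := exists_re_star_dotProduct_self_eq_one_mem_inf M
    (hX.eigenvectorSpan S) (by rw [hX.finrank_eigenvectorSpan, hS, Fintype.card_fin]; omega)
  have hbound : ∀ i ∈ S, eigDesc hX k ≤ hX.eigenvalues i := by
    simp only [S, Finset.forall_mem_image, Finset.mem_Ici]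
    exact fun i hi => Tuple.monotone_sort hX.eigenvalues hi
  simpa [hx1] using (le_re_star_dotProduct_mulVec hbound hxS).trans (h x hxM hx1)

lemma eigDesc_cfc_le (f : ℝ → ℝ) (k : Fin n) :
    eigDesc (isHermitian_cfc hX f) k ≤
      f (hX.eigenvalues (Tuple.sort (f ∘ hX.eigenvalues) k.rev)) := by
  set S := (Finset.Iic k.rev).image (Tuple.sort (f ∘ hX.eigenvalues))
  refine eigDesc_le_of_re_star_dotProduct_mulVec_le _ k (hX.eigenvectorSpan S) ?_
    fun x hx hx1 => ?_
  · rw [hX.finrank_eigenvectorSpan, Finset.card_image_of_injective _ (Tuple.sort _).injective,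
      Fin.card_Iic, Fin.val_rev]
    omega
  · have hbound : ∀ i ∈ S, f (hX.eigenvalues i) ≤
        f (hX.eigenvalues (Tuple.sort (f ∘ hX.eigenvalues) k.rev)) := by
      simp only [S, Finset.forall_mem_image, Finset.mem_Iic]
      exact fun i hi => Tuple.monotone_sort (f ∘ hX.eigenvalues) hi
    simpa [hx1] using re_star_dotProduct_cfc_mulVec_le hbound hx

lemma le_eigDesc_conjTranspose_mul_cfc_mul {f : ℝ → ℝ}
    (hf : ConvexOn ℝ Set.univ f) (hf0 : f 0 ≤ 0) {Z : Matrix (Fin n) (Fin n) ℂ}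
    (hZ : (1 - Zᴴ * Z).PosSemidef) (k : Fin n) {ν : ℝ} {G : Finset (Fin n)}
    (hG : 2 * k + 1 ≤ G.card)
    (hν : ∀ i ∈ G, ν ≤ f ((isHermitian_conjTranspose_mul_mul Z hX).eigenvalues i)) :
    ν ≤ eigDesc (isHermitian_conjTranspose_mul_mul Z (isHermitian_cfc hX f)) k := by
  set hB := isHermitian_conjTranspose_mul_mul Z hX
  obtain ⟨G', hG'G, hcard, hmono⟩ := Finset.exists_subset_card_eq_and_forall_or
    (fun i _ => hf.monotoneOn_Ici_or_antitoneOn_Iic (hB.eigenvalues i)) hG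
  refine le_eigDesc_of_le_re_star_dotProduct_mulVec _ k (hB.eigenvectorSpan G')
    (by rw [hB.finrank_eigenvectorSpan, hcard]) fun x hx hx1 => ?_
  calc ν ≤ f (star x ⬝ᵥ ((Zᴴ * X * Z) *ᵥ x)).re :=
        le_map_re_star_dotProduct_mulVec (Finset.card_pos.mp (by omega))
          (fun i hi => hν i (hG'G hi)) hmono hx hx1
    _ ≤ _ := hX.map_re_star_dotProduct_conj_mulVec_le hf hf0 hZ hx1.le

end Matrix.IsHermitian

theorem eig_cfc_contraction_le
    {n : ℕ} (f : ℝ → ℝ) (hf : ConvexOn ℝ Set.univ f) (hf0 : f 0 ≤ 0)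
    (A : Matrix (Fin n) (Fin n) ℂ) (hA : A.IsHermitian)
    (Z : Matrix (Fin n) (Fin n) ℂ) (hZ : (1 - Zᴴ * Z).PosSemidef)
    (j : ℕ) (hj : 1 ≤ j) (hjn : 2 * j - 1 ≤ n) :
    eigDesc (isHermitian_cfc (isHermitian_conjTranspose_mul_mul Z hA) f)
        ⟨2 * j - 1 - 1, by omega⟩ ≤
      eigDesc (isHermitian_conjTranspose_mul_mul Z (isHermitian_cfc hA f))
        ⟨j - 1, by omega⟩ := by
  set hB := isHermitian_conjTranspose_mul_mul Z hA
  set k : Fin n := ⟨2 * j - 1 - 1, by omega⟩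
  set τ := Tuple.sort (f ∘ hB.eigenvalues)
  refine (hB.eigDesc_cfc_le f k).trans (hA.le_eigDesc_conjTranspose_mul_cfc_mul hf hf0 hZ _
    (G := (Finset.Ici k.rev).image τ) ?_ ?_)
  · rw [Finset.card_image_of_injective _ τ.injective, Fin.card_Ici, Fin.val_rev]
    simp only [k]
    omega
  · simp only [Finset.forall_mem_image, Finset.mem_Ici]
    exact fun i hi => Tuple.monotone_sort (f ∘ hB.eigenvalues) hi
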